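/- arXiv:1607.05547 — 4 statements merged into one kernel-verified Lean document; each statement's English description precedes it below -/
import Mathlib

section
/- For all 1 ≤ k < l ≤ n, the diameter of the augmented path satisfies M(k,l) = max{ S(k,l), E(k,l), U(k,l), O(k,l) }. -/
noncomputable section

variable {X : Type*} [MetricSpace X]

/-- Path distance between vertices `i` and `j` of the path `p₁, …, pₙ`:
the sum of the edge weights `d(p_t, p_{t+1})` for `min i j ≤ t < max i j`. -/
def pathDist (p : ℕ → X) (i j : ℕ) : ℝ :=
  ∑ t ∈ Finset.Ico (min i j) (max i j), dist (p t) (p (t + 1))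

/-- Shortest-path distance between vertices `x` and `y` in the unicyclic graph
`P̄[k,l]` obtained by adding the shortcut `(p_k, p_l)` of weight `d(p_k, p_l)`. -/
def pbar (p : ℕ → X) (k l x y : ℕ) : ℝ :=
  min (pathDist p x y)
    (min (pathDist p x k + dist (p k) (p l) + pathDist p l y)
         (pathDist p x l + dist (p k) (p l) + pathDist p k y))

/-- The length `|C[k,l]|` of the cycle `C[k,l]`. -/
def cycleLen (p : ℕ → X) (k l : ℕ) : ℝ :=
  pathDist p k l + dist (p k) (p l)

/-- The cycle distance `c_{k,l}(x,y)` for `k ≤ x, y ≤ l`. -/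
def cycDist (p : ℕ → X) (k l x y : ℕ) : ℝ :=
  min (pathDist p x y) (cycleLen p k l - pathDist p x y)

/-- `S(k,l) = max_{k ≤ x ≤ l} p̄_{k,l}(1,x)`. -/
def Sfun (p : ℕ → X) (k l : ℕ) : ℝ :=
  sSup ((fun x => pbar p k l 1 x) '' Set.Icc k l)

/-- `E(k,l) = max_{k ≤ x ≤ l} p̄_{k,l}(x,n)`. -/
def Efun (p : ℕ → X) (n k l : ℕ) : ℝ :=
  sSup ((fun x => pbar p k l x n) '' Set.Icc k l)

/-- `U(k,l) = p̄_{k,l}(1,n)`. -/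
def Ufun (p : ℕ → X) (n k l : ℕ) : ℝ :=
  pbar p k l 1 n

/-- `O(k,l) = max_{k ≤ x < y ≤ l} c_{k,l}(x,y)`. -/
def Ofun (p : ℕ → X) (k l : ℕ) : ℝ :=
  sSup {r | ∃ x y : ℕ, k ≤ x ∧ x < y ∧ y ≤ l ∧ r = cycDist p k l x y}

/-- `N(k,l) = max (S(k,l), E(k,l), U(k,l))`. -/
def Nfun (p : ℕ → X) (n k l : ℕ) : ℝ :=
  max (Sfun p k l) (max (Efun p n k l) (Ufun p n k l))

/-- `M(k,l) = max_{1 ≤ x < y ≤ n} p̄_{k,l}(x,y)`, the diameter of `P̄[k,l]`. -/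
def Mfun (p : ℕ → X) (n k l : ℕ) : ℝ :=
  sSup {r | ∃ x y : ℕ, 1 ≤ x ∧ x < y ∧ y ≤ n ∧ r = pbar p k l x y}


/-! Split the pairs `x < y` by whether `x ≤ k` or `k ≤ x` and whether `y ≤ l` or `l ≤ y`.
Outside the cycle, moving `x` down towards `1` (while `x ≤ k`) or `y` up towards `n`
(while `l ≤ y`) can only lengthen a shortest path, and on the tails left of `k` and right of `l`
the shortcut is useless. Hence the pairs of the four regions are dominated by `S`, `E`, `U`
and, inside the cycle where `p̄` is the cycle distance, by `O`. Conversely each of the four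
quantities is itself a distance in `P̄[k,l]`. -/

section PathDist

variable (p : ℕ → X)

lemma pathDist_nonneg (i j : ℕ) : 0 ≤ pathDist p i j :=
  Finset.sum_nonneg fun _ _ => dist_nonneg

@[simp]
lemma pathDist_self (i : ℕ) : pathDist p i i = 0 := by
  simp [pathDist]

lemma pathDist_comm (i j : ℕ) : pathDist p i j = pathDist p j i := by
  simp only [pathDist, min_comm, max_comm]

lemma pathDist_of_le {i j : ℕ} (h : i ≤ j) :
    pathDist p i j = ∑ t ∈ Finset.Ico i j, dist (p t) (p (t + 1)) := by
  simp only [pathDist, min_eq_left h, max_eq_right h]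

lemma pathDist_add_pathDist {a b c : ℕ} (hab : a ≤ b) (hbc : b ≤ c) :
    pathDist p a b + pathDist p b c = pathDist p a c := by
  rw [pathDist_of_le p hab, pathDist_of_le p hbc, pathDist_of_le p (hab.trans hbc),
    Finset.sum_Ico_consecutive _ hab hbc]

lemma pathDist_mono {a b c d : ℕ} (hab : a ≤ b) (hbc : b ≤ c) (hcd : c ≤ d) :
    pathDist p b c ≤ pathDist p a d := by
  rw [← pathDist_add_pathDist p hab (hbc.trans hcd), ← pathDist_add_pathDist p hbc hcd]
  linarith [pathDist_nonneg p a b, pathDist_nonneg p c d]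

end PathDist

section Pbar

variable (p : ℕ → X) {k l : ℕ}

lemma pbar_nonneg (x y : ℕ) : 0 ≤ pbar p k l x y := by
  have := dist_nonneg (x := p k) (y := p l)
  unfold pbar
  refine le_min (pathDist_nonneg p x y) (le_min ?_ ?_) <;>
    linarith [pathDist_nonneg p x k, pathDist_nonneg p l y, pathDist_nonneg p x l,
      pathDist_nonneg p k y]

lemma pbar_le_pathDist (x y : ℕ) : pbar p k l x y ≤ pathDist p x y :=
  min_le_left _ _

@[simp]
lemma pbar_self (x : ℕ) : pbar p k l x x = 0 :=
  le_antisymm (by simpa [pathDist_self] using pbar_le_pathDist p (k := k) (l := l) x x)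
    (pbar_nonneg p x x)

lemma pbar_mono_left {x x' y : ℕ} (hkl : k ≤ l) (hx' : x' ≤ x) (hxk : x ≤ k) (hxy : x ≤ y) :
    pbar p k l x y ≤ pbar p k l x' y := by
  have h₁ := pathDist_mono p hx' hxy le_rfl
  have h₂ := pathDist_mono p hx' hxk le_rfl
  have h₃ := pathDist_mono p hx' (hxk.trans hkl) le_rfl
  exact min_le_min h₁ (min_le_min (by linarith) (by linarith))

lemma pbar_mono_right {x y y' : ℕ} (hkl : k ≤ l) (hxy : x ≤ y) (hly : l ≤ y) (hy : y ≤ y') :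
    pbar p k l x y ≤ pbar p k l x y' := by
  have h₁ := pathDist_mono p le_rfl hxy hy
  have h₂ := pathDist_mono p le_rfl hly hy
  have h₃ := pathDist_mono p le_rfl (hkl.trans hly) hy
  exact min_le_min h₁ (min_le_min (by linarith) (by linarith))

lemma pbar_eq_pathDist_of_le_left {x y : ℕ} (hkl : k ≤ l) (hxy : x ≤ y) (hyk : y ≤ k) :
    pbar p k l x y = pathDist p x y := by
  have := dist_nonneg (x := p k) (y := p l)
  have hxk := pathDist_add_pathDist p hxy hyk
  have hyl := pathDist_add_pathDist p hyk hkl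
  have hxl := pathDist_add_pathDist p (hxy.trans hyk) hkl
  unfold pbar
  rw [pathDist_comm p l y, pathDist_comm p k y]
  refine min_eq_left (le_min ?_ ?_) <;>
    linarith [pathDist_nonneg p y k, pathDist_nonneg p k l]

lemma pbar_eq_pathDist_of_ge_right {x y : ℕ} (hkl : k ≤ l) (hlx : l ≤ x) (hxy : x ≤ y) :
    pbar p k l x y = pathDist p x y := by
  have := dist_nonneg (x := p k) (y := p l)
  have hly := pathDist_add_pathDist p hlx hxy
  have hkx := pathDist_add_pathDist p hkl hlx
  have hky := pathDist_add_pathDist p hkl (hlx.trans hxy)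
  unfold pbar
  rw [pathDist_comm p x k, pathDist_comm p x l]
  refine min_eq_left (le_min ?_ ?_) <;>
    linarith [pathDist_nonneg p l x, pathDist_nonneg p k l]

lemma pbar_eq_cycDist {x y : ℕ} (hkx : k ≤ x) (hxy : x ≤ y) (hyl : y ≤ l) :
    pbar p k l x y = cycDist p k l x y := by
  have hky := pathDist_add_pathDist p hkx hxy
  have hxl := pathDist_add_pathDist p hxy hyl
  have hkl := pathDist_add_pathDist p hkx (hxy.trans hyl)
  unfold pbar cycDist cycleLen
  rw [pathDist_comm p x k, pathDist_comm p l y]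
  rw [min_eq_left (b := pathDist p x l + _ + _) (by linarith [pathDist_nonneg p x y])]
  congr 1
  linarith

end Pbar

lemma bddAbove_setOf_pairs (f : ℕ → ℕ → ℝ) (a b : ℕ) :
    BddAbove {r | ∃ x y : ℕ, a ≤ x ∧ x < y ∧ y ≤ b ∧ r = f x y} := by
  refine (((Set.finite_Icc a b).image2 f (Set.finite_Icc a b)).subset ?_).bddAbove
  rintro _ ⟨x, y, hax, hxy, hyb, rfl⟩
  exact Set.mem_image2_of_mem ⟨hax, hxy.le.trans hyb⟩ ⟨hax.trans hxy.le, hyb⟩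

section Extremes

variable (p : ℕ → X) {n k l : ℕ}

lemma Mfun_nonneg : 0 ≤ Mfun p n k l :=
  Real.sSup_nonneg (by rintro _ ⟨x, y, -, -, -, rfl⟩; exact pbar_nonneg p x y)

lemma pbar_le_Mfun {x y : ℕ} (hx : 1 ≤ x) (hxy : x ≤ y) (hy : y ≤ n) :
    pbar p k l x y ≤ Mfun p n k l := by
  rcases hxy.lt_or_eq with hxy | rfl
  · exact le_csSup (bddAbove_setOf_pairs _ 1 n) ⟨x, y, hx, hxy, hy, rfl⟩
  · exact (pbar_self p x).trans_le (Mfun_nonneg p)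

lemma Mfun_le {c : ℝ} (hn : 1 < n)
    (h : ∀ x y, 1 ≤ x → x < y → y ≤ n → pbar p k l x y ≤ c) : Mfun p n k l ≤ c :=
  csSup_le ⟨_, 1, n, le_rfl, hn, le_rfl, rfl⟩ <| by
    rintro _ ⟨x, y, hx, hxy, hy, rfl⟩
    exact h x y hx hxy hy

lemma le_Ofun {x y : ℕ} (hkx : k ≤ x) (hxy : x < y) (hyl : y ≤ l) :
    cycDist p k l x y ≤ Ofun p k l :=
  le_csSup (bddAbove_setOf_pairs _ k l) ⟨x, y, hkx, hxy, hyl, rfl⟩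

lemma Ofun_le {c : ℝ} (hkl : k < l)
    (h : ∀ x y, k ≤ x → x < y → y ≤ l → cycDist p k l x y ≤ c) : Ofun p k l ≤ c :=
  csSup_le ⟨_, k, l, le_rfl, hkl, le_rfl, rfl⟩ <| by
    rintro _ ⟨x, y, hkx, hxy, hyl, rfl⟩
    exact h x y hkx hxy hyl

lemma le_Sfun {x : ℕ} (hx : x ∈ Set.Icc k l) : pbar p k l 1 x ≤ Sfun p k l :=
  le_csSup ((Set.finite_Icc k l).image _).bddAbove (Set.mem_image_of_mem _ hx)

lemma Sfun_le {c : ℝ} (hkl : k ≤ l) (h : ∀ x ∈ Set.Icc k l, pbar p k l 1 x ≤ c) :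
    Sfun p k l ≤ c :=
  csSup_le ((Set.nonempty_Icc.2 hkl).image _) (Set.forall_mem_image.2 h)

lemma le_Efun {x : ℕ} (hx : x ∈ Set.Icc k l) : pbar p k l x n ≤ Efun p n k l :=
  le_csSup ((Set.finite_Icc k l).image _).bddAbove (Set.mem_image_of_mem _ hx)

lemma Efun_le {c : ℝ} (hkl : k ≤ l) (h : ∀ x ∈ Set.Icc k l, pbar p k l x n ≤ c) :
    Efun p n k l ≤ c :=
  csSup_le ((Set.nonempty_Icc.2 hkl).image _) (Set.forall_mem_image.2 h)

end Extremes

section Regions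

variable (p : ℕ → X) {n k l x y : ℕ}

lemma pbar_le_Sfun (hkl : k ≤ l) (hx : 1 ≤ x) (hxk : x ≤ k) (hxy : x ≤ y) (hyl : y ≤ l) :
    pbar p k l x y ≤ Sfun p k l := by
  rcases le_or_gt y k with hyk | hky
  · calc pbar p k l x y = pathDist p x y := pbar_eq_pathDist_of_le_left p hkl hxy hyk
      _ ≤ pathDist p 1 k := pathDist_mono p hx hxy hyk
      _ = pbar p k l 1 k := (pbar_eq_pathDist_of_le_left p hkl (hx.trans hxk) le_rfl).symm
      _ ≤ Sfun p k l := le_Sfun p ⟨le_rfl, hkl⟩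
  · exact (pbar_mono_left p hkl hx hxk hxy).trans (le_Sfun p ⟨hky.le, hyl⟩)

lemma pbar_le_Efun (hkl : k ≤ l) (hkx : k ≤ x) (hxy : x ≤ y) (hly : l ≤ y) (hyn : y ≤ n) :
    pbar p k l x y ≤ Efun p n k l := by
  rcases le_or_gt l x with hlx | hxl
  · calc pbar p k l x y = pathDist p x y := pbar_eq_pathDist_of_ge_right p hkl hlx hxy
      _ ≤ pathDist p l n := pathDist_mono p hlx hxy hyn
      _ = pbar p k l l n := (pbar_eq_pathDist_of_ge_right p hkl le_rfl (hly.trans hyn)).symm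
      _ ≤ Efun p n k l := le_Efun p ⟨hkl, le_rfl⟩
  · exact (pbar_mono_right p hkl hxy hly hyn).trans (le_Efun p ⟨hkx, hxl.le⟩)

lemma pbar_le_Ufun (hkl : k ≤ l) (hx : 1 ≤ x) (hxk : x ≤ k) (hly : l ≤ y) (hyn : y ≤ n) :
    pbar p k l x y ≤ Ufun p n k l :=
  have hxy : x ≤ y := hxk.trans (hkl.trans hly)
  (pbar_mono_left p hkl hx hxk hxy).trans (pbar_mono_right p hkl (hx.trans hxy) hly hyn)

lemma pbar_le_Ofun (hkx : k ≤ x) (hxy : x < y) (hyl : y ≤ l) : pbar p k l x y ≤ Ofun p k l :=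
  (pbar_eq_cycDist p hkx hxy.le hyl).trans_le (le_Ofun p hkx hxy hyl)

end Regions

theorem diameter_eq_max_of_four_general {X : Type*} [MetricSpace X]
    (n : ℕ) (p : ℕ → X)
    (k l : ℕ) (hk : 1 ≤ k) (hkl : k < l) (hl : l ≤ n) :
    Mfun p n k l =
      max (Sfun p k l) (max (Efun p n k l) (max (Ufun p n k l) (Ofun p k l))) := by
  refine le_antisymm (Mfun_le p (hk.trans_lt (hkl.trans_le hl)) fun x y hx hxy hyn => ?_) ?_
  · rcases le_total x k with hxk | hkx <;> rcases le_total y l with hyl | hly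
    · exact le_max_of_le_left (pbar_le_Sfun p hkl.le hx hxk hxy.le hyl)
    · exact le_max_of_le_right <| le_max_of_le_right <| le_max_of_le_left <|
        pbar_le_Ufun p hkl.le hx hxk hly hyn
    · exact le_max_of_le_right <| le_max_of_le_right <| le_max_of_le_right <|
        pbar_le_Ofun p hkx hxy hyl
    · exact le_max_of_le_right <| le_max_of_le_left <|
        pbar_le_Efun p hkl.le hkx hxy.le hly hyn
  · refine max_le ?_ (max_le ?_ (max_le ?_ ?_))
    · exact Sfun_le p hkl.le fun x hx => pbar_le_Mfun p le_rfl (hk.trans hx.1) (hx.2.trans hl)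
    · exact Efun_le p hkl.le fun x hx => pbar_le_Mfun p (hk.trans hx.1) (hx.2.trans hl) le_rfl
    · exact pbar_le_Mfun p le_rfl (hk.trans (hkl.le.trans hl)) le_rfl
    · refine Ofun_le p hkl fun x y hkx hxy hyl => ?_
      rw [← pbar_eq_cycDist p hkx hxy.le hyl]
      exact pbar_le_Mfun p (hk.trans hkx) hxy.le (hyl.trans hl)

/-- For all `1 ≤ k < l ≤ n`, the diameter of the augmented path
satisfies `M(k,l) = max (S(k,l), E(k,l), U(k,l), O(k,l))`. -/
theorem diameter_eq_max_of_four {X : Type*} [MetricSpace X]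
    (n : ℕ) (hn : 2 ≤ n) (p : ℕ → X)
    (k l : ℕ) (hk : 1 ≤ k) (hkl : k < l) (hl : l ≤ n) :
    Mfun p n k l =
      max (Sfun p k l) (max (Efun p n k l) (max (Ufun p n k l) (Ofun p k l))) :=
  diameter_eq_max_of_four_general n p k l hk hkl hl
end
end

section
/- Let λ > 0 and 1 ≤ k < l ≤ n with N(k,l) ≤ λ. Then: (i) every x with k ≤ x ≤ l lies in K ∪ L; (ii) c_{k,l}(x,y) ≤ λ for all x, y ∈ K; (iii) c_{k,l}(x,y) ≤ λ for all x, y ∈ L; (iv) c_{k,l}(x,y) ≤ λ for all x ∈ K ∩ L and all y with k ≤ y ≤ l. -/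
/-!
Every route in `P̄[k,l]` from `p₁` to a cycle vertex `p_x` enters the cycle at `p_k` or `p_l`,
so `S(k,l) ≤ λ` puts `x` in `K ∪ L`. Cycle distances are at most path distances, and `K`
(resp. `L`) is a path segment starting at `k` (resp. ending at `l`) of length at most `λ`, which gives
(ii) and (iii); (iv) follows by splitting `y` according to (i).
-/

noncomputable section

variable {X : Type*} [MetricSpace X]

section PathDist

variable (p : ℕ → X)

lemma pathDist_add {i j m : ℕ} (hij : i ≤ j) (hjm : j ≤ m) :
    pathDist p i m = pathDist p i j + pathDist p j m := by
  simp only [pathDist, min_eq_left, max_eq_right, hij, hjm, hij.trans hjm,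
    Finset.sum_Ico_consecutive _ hij hjm]

lemma pathDist_le_pathDist_of_le_left {a x y : ℕ} (hax : a ≤ x) (hxy : x ≤ y) :
    pathDist p x y ≤ pathDist p a y := by
  linarith [pathDist_add p hax hxy, pathDist_nonneg p a x]

lemma pathDist_le_pathDist_of_le_right {x y b : ℕ} (hxy : x ≤ y) (hyb : y ≤ b) :
    pathDist p x y ≤ pathDist p x b := by
  linarith [pathDist_add p hxy hyb, pathDist_nonneg p y b]

lemma pathDist_le_max_of_le {a x y : ℕ} (hax : a ≤ x) (hay : a ≤ y) :
    pathDist p x y ≤ max (pathDist p a x) (pathDist p a y) := by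
  rcases le_total x y with h | h
  · exact (pathDist_le_pathDist_of_le_left p hax h).trans (le_max_right _ _)
  · rw [pathDist_comm]
    exact (pathDist_le_pathDist_of_le_left p hay h).trans (le_max_left _ _)

lemma pathDist_le_max_of_ge {x y b : ℕ} (hxb : x ≤ b) (hyb : y ≤ b) :
    pathDist p x y ≤ max (pathDist p x b) (pathDist p y b) := by
  rcases le_total x y with h | h
  · exact (pathDist_le_pathDist_of_le_right p h hyb).trans (le_max_left _ _)
  · rw [pathDist_comm]
    exact (pathDist_le_pathDist_of_le_right p h hxb).trans (le_max_right _ _)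

lemma cycDist_le_pathDist (k l x y : ℕ) : cycDist p k l x y ≤ pathDist p x y :=
  min_le_left _ _

lemma min_pathDist_le_pbar {a k l x : ℕ} (hak : a ≤ k) (hkx : k ≤ x) :
    min (pathDist p k x) (pathDist p x l) ≤ pbar p k l a x := by
  have hd := dist_nonneg (x := p k) (y := p l)
  have hak' := pathDist_nonneg p a k
  have hal := pathDist_nonneg p a l
  have hax := pathDist_le_pathDist_of_le_left p hak hkx
  rw [pathDist_comm p x l]
  refine le_min ?_ (le_min ?_ ?_)
  · exact (min_le_left _ _).trans hax
  · exact (min_le_right _ _).trans (by linarith)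
  · exact (min_le_left _ _).trans (by linarith)

lemma pbar_le_Sfun_s4 {k l x : ℕ} (hkx : k ≤ x) (hxl : x ≤ l) : pbar p k l 1 x ≤ Sfun p k l :=
  le_csSup ((Set.finite_Icc k l).image _).bddAbove (Set.mem_image_of_mem _ ⟨hkx, hxl⟩)

lemma Sfun_le_Nfun (n k l : ℕ) : Sfun p k l ≤ Nfun p n k l :=
  le_max_left _ _

lemma pathDist_le_or_pathDist_le_of_Nfun_le {n k l x : ℕ} {lam : ℝ} (hk : 1 ≤ k)
    (hN : Nfun p n k l ≤ lam) (hkx : k ≤ x) (hxl : x ≤ l) :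
    pathDist p k x ≤ lam ∨ pathDist p x l ≤ lam :=
  min_le_iff.mp <| (min_pathDist_le_pbar p hk hkx).trans <|
    (pbar_le_Sfun_s4 p hkx hxl).trans <| (Sfun_le_Nfun p n k l).trans hN

end PathDist

theorem cycle_properties_of_KL_general {X : Type*} [MetricSpace X]
    (n : ℕ) (p : ℕ → X)
    (k l : ℕ) (hk : 1 ≤ k)
    (lam : ℝ) (hN : Nfun p n k l ≤ lam) :
    (∀ x : ℕ, k ≤ x → x ≤ l →
        x ∈ ({x : ℕ | k ≤ x ∧ x ≤ l ∧ pathDist p k x ≤ lam} ∪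
             {x : ℕ | k ≤ x ∧ x ≤ l ∧ pathDist p x l ≤ lam})) ∧
    (∀ x ∈ {x : ℕ | k ≤ x ∧ x ≤ l ∧ pathDist p k x ≤ lam},
      ∀ y ∈ {x : ℕ | k ≤ x ∧ x ≤ l ∧ pathDist p k x ≤ lam},
        cycDist p k l x y ≤ lam) ∧
    (∀ x ∈ {x : ℕ | k ≤ x ∧ x ≤ l ∧ pathDist p x l ≤ lam},
      ∀ y ∈ {x : ℕ | k ≤ x ∧ x ≤ l ∧ pathDist p x l ≤ lam},
        cycDist p k l x y ≤ lam) ∧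
    (∀ x ∈ ({x : ℕ | k ≤ x ∧ x ≤ l ∧ pathDist p k x ≤ lam} ∩
            {x : ℕ | k ≤ x ∧ x ≤ l ∧ pathDist p x l ≤ lam}),
      ∀ y : ℕ, k ≤ y → y ≤ l → cycDist p k l x y ≤ lam) := by
  have cover := fun (x : ℕ) (hkx : k ≤ x) (hxl : x ≤ l) =>
    pathDist_le_or_pathDist_le_of_Nfun_le p hk hN hkx hxl
  have hK : ∀ x ∈ {x : ℕ | k ≤ x ∧ x ≤ l ∧ pathDist p k x ≤ lam},
      ∀ y ∈ {x : ℕ | k ≤ x ∧ x ≤ l ∧ pathDist p k x ≤ lam}, cycDist p k l x y ≤ lam := by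
    rintro x ⟨hkx, -, hx⟩ y ⟨hky, -, hy⟩
    exact (cycDist_le_pathDist p k l x y).trans
      ((pathDist_le_max_of_le p hkx hky).trans (max_le hx hy))
  have hL : ∀ x ∈ {x : ℕ | k ≤ x ∧ x ≤ l ∧ pathDist p x l ≤ lam},
      ∀ y ∈ {x : ℕ | k ≤ x ∧ x ≤ l ∧ pathDist p x l ≤ lam}, cycDist p k l x y ≤ lam := by
    rintro x ⟨-, hxl, hx⟩ y ⟨-, hyl, hy⟩
    exact (cycDist_le_pathDist p k l x y).trans
      ((pathDist_le_max_of_ge p hxl hyl).trans (max_le hx hy))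
  refine ⟨?_, hK, hL, ?_⟩
  · intro x hkx hxl
    exact (cover x hkx hxl).imp (⟨hkx, hxl, ·⟩) (⟨hkx, hxl, ·⟩)
  · rintro x ⟨hxK, hxL⟩ y hky hyl
    rcases cover y hky hyl with hy | hy
    · exact hK x hxK y ⟨hky, hyl, hy⟩
    · exact hL x hxL y ⟨hky, hyl, hy⟩

/-- Let `λ > 0` and `1 ≤ k < l ≤ n` with `N(k,l) ≤ λ`. Then:
(i) every `x` with `k ≤ x ≤ l` lies in `K ∪ L`;
(ii) `c_{k,l}(x,y) ≤ λ` for all `x, y ∈ K`;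
(iii) `c_{k,l}(x,y) ≤ λ` for all `x, y ∈ L`;
(iv) `c_{k,l}(x,y) ≤ λ` for all `x ∈ K ∩ L` and all `y` with `k ≤ y ≤ l`. -/
theorem cycle_properties_of_KL {X : Type*} [MetricSpace X]
    (n : ℕ) (hn : 2 ≤ n) (p : ℕ → X)
    (k l : ℕ) (hk : 1 ≤ k) (hkl : k < l) (hl : l ≤ n)
    (lam : ℝ) (hlam : 0 < lam) (hN : Nfun p n k l ≤ lam) :
    (∀ x : ℕ, k ≤ x → x ≤ l →
        x ∈ ({x : ℕ | k ≤ x ∧ x ≤ l ∧ pathDist p k x ≤ lam} ∪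
             {x : ℕ | k ≤ x ∧ x ≤ l ∧ pathDist p x l ≤ lam})) ∧
    (∀ x ∈ {x : ℕ | k ≤ x ∧ x ≤ l ∧ pathDist p k x ≤ lam},
      ∀ y ∈ {x : ℕ | k ≤ x ∧ x ≤ l ∧ pathDist p k x ≤ lam},
        cycDist p k l x y ≤ lam) ∧
    (∀ x ∈ {x : ℕ | k ≤ x ∧ x ≤ l ∧ pathDist p x l ≤ lam},
      ∀ y ∈ {x : ℕ | k ≤ x ∧ x ≤ l ∧ pathDist p x l ≤ lam},
        cycDist p k l x y ≤ lam) ∧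
    (∀ x ∈ ({x : ℕ | k ≤ x ∧ x ≤ l ∧ pathDist p k x ≤ lam} ∩
            {x : ℕ | k ≤ x ∧ x ≤ l ∧ pathDist p x l ≤ lam}),
      ∀ y : ℕ, k ≤ y → y ≤ l → cycDist p k l x y ≤ lam) :=
  cycle_properties_of_KL_general n p k l hk lam hN
end
end

section
/- Let λ > 0 and 1 ≤ k < l ≤ n with N(k,l) ≤ λ. Then O(k,l) ≤ λ if and only if Δ(x) ≥ |C[k,l]| − 2λ for every x ∈ K'. -/
noncomputable section

variable {X : Type*} [MetricSpace X]

/- The bound `S(k,l) ≤ λ` forces every `x` on the cycle with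
`δ_P(x,l) > λ` into `K`, because the route from `p_1` to `p_x` through the shortcut is then
longer than `λ`. If some cycle distance `c(x,y)` exceeds `λ`, then `x ∈ K'` and `x' ≤ y`, so
`Δ(x) ≤ δ_P(x,y) - λ < |C[k,l]| - 2λ`. Conversely `δ_P(x,x') > λ` makes `c(x,x') ≤ λ` read
`|C[k,l]| - δ_P(x,x') ≤ λ`, which is `Δ(x) ≥ |C[k,l]| - 2λ`. -/

section

variable (p : ℕ → X)

lemma pathDist_le_pathDist {i j m : ℕ} (hij : i ≤ j) (hjm : j ≤ m) :
    pathDist p i j ≤ pathDist p i m := by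
  rw [pathDist_add p hij hjm]
  linarith [pathDist_nonneg p j m]

lemma Ofun_le_iff {k l : ℕ} {lam : ℝ} (hlam : 0 ≤ lam) :
    Ofun p k l ≤ lam ↔
      ∀ x y, k ≤ x → x < y → y ≤ l → cycDist p k l x y ≤ lam := by
  set O := {r | ∃ x y : ℕ, k ≤ x ∧ x < y ∧ y ≤ l ∧ r = cycDist p k l x y}
  have hO : O ⊆ (fun q : ℕ × ℕ => cycDist p k l q.1 q.2) '' (Set.Icc k l ×ˢ Set.Icc k l) := by
    rintro r ⟨x, y, hkx, hxy, hyl, rfl⟩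
    exact ⟨(x, y), ⟨⟨hkx, (hxy.trans_le hyl).le⟩, ⟨hkx.trans hxy.le, hyl⟩⟩, rfl⟩
  have hbdd : BddAbove O :=
    (((Set.finite_Icc k l).prod (Set.finite_Icc k l)).image _).bddAbove.mono hO
  constructor
  · intro h x y hkx hxy hyl
    exact (le_csSup hbdd ⟨x, y, hkx, hxy, hyl, rfl⟩).trans h
  · intro h
    refine Real.sSup_le ?_ hlam
    rintro r ⟨x, y, hkx, hxy, hyl, rfl⟩
    exact h x y hkx hxy hyl

lemma pbar_one_le_Sfun {k l x : ℕ} (hx : x ∈ Set.Icc k l) : pbar p k l 1 x ≤ Sfun p k l :=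
  le_csSup ((Set.finite_Icc k l).image _).bddAbove ⟨x, hx, rfl⟩

lemma min_pathDist_le_pbar_one {k l x : ℕ} (hk : 1 ≤ k) (hkx : k ≤ x) :
    min (pathDist p k x) (dist (p k) (p l) + pathDist p x l) ≤ pbar p k l 1 x := by
  have h1x : pathDist p 1 x = pathDist p 1 k + pathDist p k x := pathDist_add p hk hkx
  have h1k := pathDist_nonneg p 1 k
  have h1l := pathDist_nonneg p 1 l
  rw [pbar, pathDist_comm p l x]
  refine le_min ?_ (le_min ?_ ?_)
  · exact (min_le_left _ _).trans (by linarith)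
  · exact (min_le_right _ _).trans (by linarith)
  · exact (min_le_left _ _).trans (by linarith [dist_nonneg (x := p k) (y := p l)])

lemma mem_sdiff_of_Nfun_le {n k l x : ℕ} {lam : ℝ} (hk : 1 ≤ k) (hN : Nfun p n k l ≤ lam)
    (hkx : k ≤ x) (hxl : x ≤ l) (hfar : lam < pathDist p x l) :
    x ∈ {z : ℕ | k ≤ z ∧ z ≤ l ∧ pathDist p k z ≤ lam} \
      {z : ℕ | k ≤ z ∧ z ≤ l ∧ pathDist p z l ≤ lam} := by
  have hpbar : pbar p k l 1 x ≤ lam :=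
    (pbar_one_le_Sfun p ⟨hkx, hxl⟩).trans ((le_max_left _ _).trans hN)
  have hmin := (min_pathDist_le_pbar_one p hk hkx).trans hpbar
  refine ⟨⟨hkx, hxl, (min_le_iff.mp hmin).resolve_right ?_⟩, fun h => h.2.2.not_gt hfar⟩
  linarith [dist_nonneg (x := p k) (y := p l)]

end

theorem O_le_iff_defects_large_general {X : Type*} [MetricSpace X]
    (n : ℕ) (p : ℕ → X)
    (k l : ℕ) (hk : 1 ≤ k)
    (lam : ℝ) (hlam : 0 < lam) (hN : Nfun p n k l ≤ lam) :
    Ofun p k l ≤ lam ↔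
      ∀ x ∈ {z : ℕ | k ≤ z ∧ z ≤ l ∧ pathDist p k z ≤ lam} \
            {z : ℕ | k ≤ z ∧ z ≤ l ∧ pathDist p z l ≤ lam},
        cycleLen p k l - 2 * lam ≤
          pathDist p x (sInf {v : ℕ | x < v ∧ v ≤ l ∧ lam < pathDist p x v}) - lam := by
  rw [Ofun_le_iff p hlam.le]
  constructor
  · rintro hO x ⟨⟨hkx, hxl, -⟩, hxL⟩
    have hfar : lam < pathDist p x l := not_le.mp fun h => hxL ⟨hkx, hxl, h⟩
    have hxl' : x < l := hxl.lt_of_ne <| by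
      rintro rfl
      rw [pathDist, min_self, max_self, Finset.Ico_self, Finset.sum_empty] at hfar
      exact hlam.not_gt hfar
    have hl : l ∈ {v : ℕ | x < v ∧ v ≤ l ∧ lam < pathDist p x v} := ⟨hxl', le_rfl, hfar⟩
    obtain ⟨hxx', hx'l, hgt⟩ := Nat.sInf_mem ⟨l, hl⟩
    have hcyc := hO x _ hkx hxx' hx'l
    rw [cycDist, min_le_iff] at hcyc
    rcases hcyc with h | h <;> linarith
  · intro hΔ x y hkx hxy hyl
    by_contra! hc
    rw [cycDist, lt_min_iff] at hc
    have hxK' := mem_sdiff_of_Nfun_le p hk hN hkx (hxy.trans_le hyl).le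
      (hc.1.trans_le (pathDist_le_pathDist p hxy.le hyl))
    have hy : y ∈ {v : ℕ | x < v ∧ v ≤ l ∧ lam < pathDist p x v} := ⟨hxy, hyl, hc.1⟩
    have hx'y := pathDist_le_pathDist p (Nat.sInf_mem ⟨y, hy⟩).1.le (Nat.sInf_le hy)
    linarith [hΔ x hxK']

/-- Let `λ > 0` and `1 ≤ k < l ≤ n` with `N(k,l) ≤ λ`. Then
`O(k,l) ≤ λ` if and only if `Δ(x) ≥ |C[k,l]| − 2λ` for every `x ∈ K' = K \ L`,
where `Δ(x) = δ_P(x,x') − λ` and `x'` is the smallest index with `x < x' ≤ l`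
and `δ_P(x,x') > λ`. -/
theorem O_le_iff_defects_large {X : Type*} [MetricSpace X]
    (n : ℕ) (hn : 2 ≤ n) (p : ℕ → X)
    (k l : ℕ) (hk : 1 ≤ k) (hkl : k < l) (hl : l ≤ n)
    (lam : ℝ) (hlam : 0 < lam) (hN : Nfun p n k l ≤ lam) :
    Ofun p k l ≤ lam ↔
      ∀ x ∈ {z : ℕ | k ≤ z ∧ z ≤ l ∧ pathDist p k z ≤ lam} \
            {z : ℕ | k ≤ z ∧ z ≤ l ∧ pathDist p z l ≤ lam},
        cycleLen p k l - 2 * lam ≤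
          pathDist p x (sInf {v : ℕ | x < v ∧ v ≤ l ∧ lam < pathDist p x v}) - lam :=
  O_le_iff_defects_large_general n p k l hk lam hlam hN
end
end

section
/- Let u, v be vertices of T such that the diameter of T ∪ {(u,v)} is strictly less than diam(T). Then δ_T(σ(u), u) + d(u,v) + δ_T(v, σ(v)) < δ_T(σ(u), σ(v)); in particular σ(u) ≠ σ(v). -/
noncomputable section

open SimpleGraph

/-- The weight of a walk in a graph whose vertices are embedded in a metric space
via `f`: the sum of the metric distances along its edges. -/
def walkWeight {V : Type*} {X : Type*} [MetricSpace X] (G : SimpleGraph V) (f : V → X)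
    {a b : V} (w : G.Walk a b) : ℝ :=
  (w.darts.map (fun e => dist (f e.fst) (f e.snd))).sum

/-- The shortest-path distance `δ_T(x,y)` in the tree `T = (G, f)`: since edge
weights are nonnegative and the path between `x` and `y` in a tree is unique,
this equals the sum of the edge weights along that unique path. -/
def treeDist {V : Type*} {X : Type*} [MetricSpace X] (G : SimpleGraph V) (f : V → X)
    (x y : V) : ℝ :=
  sInf {r | ∃ w : G.Walk x y, r = walkWeight G f w}

/-- The diameter `diam(T) = max_{x,y} δ_T(x,y)`. -/
def treeDiam {V : Type*} {X : Type*} [MetricSpace X] (G : SimpleGraph V) (f : V → X) : ℝ :=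
  sSup {r | ∃ x y : V, r = treeDist G f x y}

/-- The shortest-path distance between `x` and `y` in the augmented graph
`T ∪ {(u,v)}`, where the shortcut edge `(u,v)` has weight `d(f u, f v)`. -/
def augDist {V : Type*} {X : Type*} [MetricSpace X] (G : SimpleGraph V) (f : V → X)
    (u v x y : V) : ℝ :=
  min (treeDist G f x y)
    (min (treeDist G f x u + dist (f u) (f v) + treeDist G f v y)
         (treeDist G f x v + dist (f u) (f v) + treeDist G f u y))

/-- The diameter of the augmented graph `T ∪ {(u,v)}`. -/
def augDiam {V : Type*} {X : Type*} [MetricSpace X] (G : SimpleGraph V) (f : V → X)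
    (u v : V) : ℝ :=
  sSup {r | ∃ x y : V, r = augDist G f u v x y}

/-- A walk is a *longest path* of `T` if it is a path whose weight equals the
diameter of `T`. -/
def IsLongestPath {V : Type*} {X : Type*} [MetricSpace X] (G : SimpleGraph V) (f : V → X)
    {a b : V} (w : G.Walk a b) : Prop :=
  w.IsPath ∧ walkWeight G f w = treeDiam G f

/-- `P_T`: the set of vertices of `T` that lie on every longest path of `T`. -/
def PT {V : Type*} {X : Type*} [MetricSpace X] (G : SimpleGraph V) (f : V → X) : Set V :=
  {z | ∀ (a b : V) (w : G.Walk a b), IsLongestPath G f w → z ∈ w.support}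

/-!
Every vertex `w` enters `P_T` at a "foot" `t`, the vertex of `P_T` closest to `w` in hops; then
`t` and `σ w` are at distance zero and `δ(w, x) = δ(w, t) + δ(t, x)` for every `x` outside the
branch of `T` at `t` that contains `w`. If a longest path `a … b` has both ends outside the
branches of `u` and of `v`, the shortcut has to beat `δ(a, b)` along `a - u - v - b` or along
`a - v - u - b`; both feet lie on `a … b`, so one of these routes is too long and the other gives
the inequality. Such a longest path exists unless the longest path avoiding the branch of `u`
enters that of `v` and vice versa. In this crossing case, the two ends `b₁`, `b₂` outside both
branches are themselves at distance `diam T` when the feet differ; when the feet coincide, the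
shortcut bounds for the two longest paths add up to `2 d(u, v) < 0`.
-/

open Walk

section WalkWeight

variable {V X : Type*} [MetricSpace X] {G : SimpleGraph V} {f : V → X}

lemma walkWeight_append {a b c : V} (p : G.Walk a b) (q : G.Walk b c) :
    walkWeight G f (p.append q) = walkWeight G f p + walkWeight G f q := by
  simp [walkWeight, darts_append]

lemma walkWeight_reverse {a b : V} (p : G.Walk a b) :
    walkWeight G f p.reverse = walkWeight G f p := by
  simp only [walkWeight, darts_reverse, List.map_reverse, List.sum_reverse, List.map_map]
  exact congrArg List.sum (List.map_congr_left fun _ _ => dist_comm _ _)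

lemma walkWeight_nonneg {a b : V} (p : G.Walk a b) : 0 ≤ walkWeight G f p :=
  List.sum_nonneg (by simp)

lemma treeDist_le_walkWeight {a b : V} (p : G.Walk a b) : treeDist G f a b ≤ walkWeight G f p :=
  csInf_le ⟨0, by rintro r ⟨w, rfl⟩; exact walkWeight_nonneg w⟩ ⟨p, rfl⟩

lemma walkWeight_bypass_le [DecidableEq V] {a b : V} (p : G.Walk a b) :
    walkWeight G f p.bypass ≤ walkWeight G f p :=
  (p.darts_bypass_sublist_darts.map _).sum_le_sum (by simp)

end WalkWeight

lemma finite_setOf_exists_eq {V : Type*} [Finite V] (g : V → V → ℝ) :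
    {r | ∃ x y, r = g x y}.Finite :=
  (Set.finite_range fun p : V × V => g p.1 p.2).subset
    (by rintro _ ⟨x, y, rfl⟩; exact ⟨(x, y), rfl⟩)

namespace SimpleGraph.IsTree

variable {V : Type*} {G : SimpleGraph V} (hG : G.IsTree)

def path (x y : V) : G.Walk x y := (hG.existsUnique_path x y).exists.choose

lemma isPath_path (x y : V) : (hG.path x y).IsPath :=
  (hG.existsUnique_path x y).exists.choose_spec

lemma eq_path {x y : V} {p : G.Walk x y} (hp : p.IsPath) : p = hG.path x y :=
  (hG.existsUnique_path x y).unique hp (hG.isPath_path x y)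

lemma reverse_path (x y : V) : (hG.path x y).reverse = hG.path y x :=
  hG.eq_path (hG.isPath_path x y).reverse

lemma mem_path_comm {x y z : V} :
    z ∈ (hG.path x y).support ↔ z ∈ (hG.path y x).support := by
  rw [← hG.reverse_path y x, support_reverse, List.mem_reverse]

lemma path_eq_append {x y z : V} (hz : z ∈ (hG.path x y).support) :
    hG.path x y = (hG.path x z).append (hG.path z y) := by
  classical
  have hp := hG.isPath_path x y
  conv_lhs => rw [← (hG.path x y).take_spec hz]
  rw [hG.eq_path (hp.takeUntil hz), hG.eq_path (hp.dropUntil hz)]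

lemma mem_path_or_mem_path {x y z w : V} (hz : z ∈ (hG.path x y).support)
    (hw : w ∈ (hG.path x y).support) :
    w ∈ (hG.path x z).support ∨ w ∈ (hG.path z y).support := by
  rwa [hG.path_eq_append hz, mem_support_append_iff] at hw

lemma support_path_subset_left {x y z : V} (hz : z ∈ (hG.path x y).support) :
    (hG.path x z).support ⊆ (hG.path x y).support := by
  rw [hG.path_eq_append hz]; exact support_subset_support_append_left _ _

lemma support_path_subset_right {x y z : V} (hz : z ∈ (hG.path x y).support) :
    (hG.path z y).support ⊆ (hG.path x y).support := by
  rw [hG.path_eq_append hz]; exact support_subset_support_append_right _ _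

lemma support_path_subset {x y z w : V} (hz : z ∈ (hG.path x y).support)
    (hw : w ∈ (hG.path x y).support) :
    (hG.path z w).support ⊆ (hG.path x y).support := by
  rcases hG.mem_path_or_mem_path hz hw with hw' | hw'
  · intro r hr
    exact hG.support_path_subset_left hz
      (hG.support_path_subset_right hw' (hG.mem_path_comm.mp hr))
  · exact fun r hr => hG.support_path_subset_right hz (hG.support_path_subset_left hw' hr)

/-- The first step from `t` towards `x`; it is `t` itself when `x = t`. -/
def next (t x : V) : V := (hG.path t x).snd

lemma next_mem_path (t x : V) : hG.next t x ∈ (hG.path t x).support :=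
  getVert_mem_support _ _

lemma next_ne_self {t x : V} (hx : x ≠ t) : hG.next t x ≠ t := fun h =>
  one_ne_zero <| ((hG.isPath_path t x).getVert_eq_start_iff_of_not_nil
    (not_nil_of_ne hx.symm)).mp h

lemma next_eq_of_mem_path {t x y : V} (hy : y ∈ (hG.path t x).support) (hyt : y ≠ t) :
    hG.next t y = hG.next t x := by
  classical
  rw [next, ← hG.eq_path ((hG.isPath_path t x).takeUntil hy), snd_takeUntil hyt]
  rfl

lemma mem_path_of_next_ne {t x y : V} (h : hG.next t x ≠ hG.next t y) :
    t ∈ (hG.path x y).support := by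
  have hq := hG.isPath_path t y
  have hpq : ((hG.path x t).append (hG.path t y)).IsPath := by
    rw [isPath_def, support_append, List.nodup_append]
    refine ⟨(hG.isPath_path x t).support_nodup, hq.support_nodup.sublist (List.tail_sublist _), ?_⟩
    rintro r hr _ hr' rfl
    have hrt : r ≠ t := by
      rintro rfl
      have := hq.support_nodup
      rw [← cons_tail_support, List.nodup_cons] at this
      exact this.1 hr'
    exact h ((hG.next_eq_of_mem_path (hG.mem_path_comm.mp hr) hrt).symm.trans
      (hG.next_eq_of_mem_path ((List.tail_sublist _).subset hr') hrt))
  rw [← hG.eq_path hpq]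
  exact (mem_support_append_iff _ _).mpr (Or.inl (end_mem_support _))

lemma next_ne_of_mem_path {t x y : V} (ht : t ∈ (hG.path x y).support) (hx : x ≠ t) :
    hG.next t x ≠ hG.next t y := by
  intro heq
  have hpath : ((hG.path x t).append (hG.path t y)).IsPath :=
    hG.path_eq_append ht ▸ hG.isPath_path x y
  have hx' : hG.next t x ∈ (hG.path x t).support := hG.mem_path_comm.mp (hG.next_mem_path t x)
  have hy' : hG.next t x ∈ (hG.path t y).support := heq ▸ hG.next_mem_path t y
  exact hpath.ne_of_mem_support_of_append (hG.next_ne_self hx) hx' hy' rfl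

lemma exists_foot (S : Set V) (hS : S.Nonempty) (u : V) : ∃ t ∈ S, u = t ∨ hG.next t u ∉ S := by
  classical
  obtain ⟨t, ht, hmin⟩ :=
    exists_minimalFor_of_wellFoundedLT (· ∈ S) (fun t => (hG.path u t).length) hS
  refine ⟨t, ht, or_iff_not_imp_left.mpr fun hut hm => ?_⟩
  have hm' : hG.next t u ∈ (hG.path u t).support := hG.mem_path_comm.mp (hG.next_mem_path t u)
  have hlt : (hG.path u (hG.next t u)).length < (hG.path u t).length := by
    rw [← hG.eq_path ((hG.isPath_path u t).takeUntil hm')]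
    exact length_takeUntil_lt_length hm' (hG.next_ne_self hut)
  exact absurd (hmin hm hlt.le) (not_le.mpr hlt)

end SimpleGraph.IsTree

section TreeMetric

variable {V X : Type*} [MetricSpace X] {G : SimpleGraph V} (hG : G.IsTree) (f : V → X)
include hG

local notation "δ" => treeDist G f

lemma treeDist_eq_walkWeight {x y : V} {p : G.Walk x y} (hp : p.IsPath) :
    δ x y = walkWeight G f p := by
  classical
  refine le_antisymm (treeDist_le_walkWeight p) (le_csInf ⟨_, p, rfl⟩ ?_)
  rintro r ⟨w, rfl⟩
  calc walkWeight G f p = walkWeight G f w.bypass := by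
        rw [hG.eq_path hp, hG.eq_path w.bypass_isPath]
    _ ≤ walkWeight G f w := walkWeight_bypass_le w

lemma treeDist_nonneg (x y : V) : 0 ≤ δ x y :=
  (treeDist_eq_walkWeight hG f (hG.isPath_path x y)).symm ▸ walkWeight_nonneg _

lemma treeDist_self (x : V) : δ x x = 0 := by
  rw [treeDist_eq_walkWeight hG f IsPath.nil]
  simp [walkWeight]

lemma treeDist_comm (x y : V) : δ x y = δ y x := by
  rw [treeDist_eq_walkWeight hG f (hG.isPath_path x y), ← walkWeight_reverse,
    ← treeDist_eq_walkWeight hG f (hG.isPath_path x y).reverse]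

lemma treeDist_triangle (x y z : V) : δ x z ≤ δ x y + δ y z := by
  rw [treeDist_eq_walkWeight hG f (hG.isPath_path x y),
    treeDist_eq_walkWeight hG f (hG.isPath_path y z),
    ← walkWeight_append]
  exact treeDist_le_walkWeight _

lemma treeDist_eq_add_of_mem_path {x y z : V} (hz : z ∈ (hG.path x y).support) :
    δ x y = δ x z + δ z y := by
  rw [treeDist_eq_walkWeight hG f (hG.isPath_path x y), hG.path_eq_append hz, walkWeight_append,
    ← treeDist_eq_walkWeight hG f (hG.isPath_path x z),
    ← treeDist_eq_walkWeight hG f (hG.isPath_path z y)]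

lemma treeDist_eq_add_of_next_ne {t x y : V} (h : hG.next t x ≠ hG.next t y) :
    δ x y = δ x t + δ t y :=
  treeDist_eq_add_of_mem_path hG f (hG.mem_path_of_next_ne h)

end TreeMetric

section PT

variable {V X : Type*} [MetricSpace X] {G : SimpleGraph V} {f : V → X} (hG : G.IsTree)
include hG

local notation "δ" => treeDist G f

lemma isLongestPath_path {a b : V} (hab : δ a b = treeDiam G f) :
    IsLongestPath G f (hG.path a b) :=
  ⟨hG.isPath_path a b, (treeDist_eq_walkWeight hG f (hG.isPath_path a b)).symm.trans hab⟩

lemma mem_path_of_mem_PT {z a b : V} (hz : z ∈ PT G f) (hab : δ a b = treeDiam G f) :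
    z ∈ (hG.path a b).support :=
  hz a b _ (isLongestPath_path hG hab)

lemma treeDist_eq_add_of_mem_PT {z a b : V} (hz : z ∈ PT G f) (hab : δ a b = treeDiam G f) :
    δ a b = δ a z + δ z b :=
  treeDist_eq_add_of_mem_path hG f (mem_path_of_mem_PT hG hz hab)

lemma mem_PT_of_mem_path {z z' y : V} (hz : z ∈ PT G f) (hz' : z' ∈ PT G f)
    (hy : y ∈ (hG.path z z').support) : y ∈ PT G f := by
  intro a b w hw
  have hab : δ a b = treeDiam G f := (treeDist_eq_walkWeight hG f hw.1).trans hw.2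
  rw [hG.eq_path hw.1]
  exact hG.support_path_subset (mem_path_of_mem_PT hG hz hab) (mem_path_of_mem_PT hG hz' hab) hy

lemma next_mem_PT {t z : V} (ht : t ∈ PT G f) (hz : z ∈ PT G f) : hG.next t z ∈ PT G f :=
  mem_PT_of_mem_path hG ht hz (hG.next_mem_path t z)

lemma exists_diam_pair_next_ne {t n : V} (ht : t ∈ PT G f) (hn : n ∉ PT G f) :
    ∃ a b, δ a b = treeDiam G f ∧ hG.next t a ≠ n ∧ hG.next t b ≠ n := by
  obtain ⟨a, b, w, hw, hnw⟩ : ∃ a b, ∃ w : G.Walk a b, IsLongestPath G f w ∧ n ∉ w.support := by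
    simpa [PT] using hn
  have hab : δ a b = treeDiam G f := (treeDist_eq_walkWeight hG f hw.1).trans hw.2
  rw [hG.eq_path hw.1] at hnw
  have htab := mem_path_of_mem_PT hG ht hab
  refine ⟨a, b, hab, fun h => hnw ?_, fun h => hnw ?_⟩
  · exact hG.support_path_subset htab (start_mem_support _) (h ▸ hG.next_mem_path t a)
  · exact hG.support_path_subset htab (end_mem_support _) (h ▸ hG.next_mem_path t b)

lemma mem_path_of_next_not_mem_PT {t t' a b : V} (ht : t ∈ PT G f) (ht' : t' ∈ PT G f)
    (htt' : t ≠ t') (hab : δ a b = treeDiam G f) (ha : hG.next t' a ∉ PT G f) :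
    t ∈ (hG.path t' b).support := by
  refine (hG.mem_path_or_mem_path (mem_path_of_mem_PT hG ht' hab)
    (mem_path_of_mem_PT hG ht hab)).resolve_left fun hta => ha ?_
  rw [← hG.next_eq_of_mem_path (hG.mem_path_comm.mp hta) htt']
  exact next_mem_PT hG ht' ht

/-- Edges of weight zero are allowed (`f` need not be injective), so the foot `t` and the
projection `s` may be different vertices at distance zero. -/
lemma treeDist_eq_of_foot {u s t : V} (ht : t ∈ PT G f) (hu : u = t ∨ hG.next t u ∉ PT G f)
    (hs : s ∈ PT G f) (hproj : δ u t = δ u s + δ s t) (x : V) : δ t x = δ s x := by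
  have hsplit : δ u s = δ u t + δ t s := by
    rcases hu with rfl | hu
    · rw [treeDist_self hG f, zero_add]
    · exact treeDist_eq_add_of_next_ne hG f fun h => hu (h ▸ next_mem_PT hG ht hs)
  have hts : δ t s = 0 := by
    linarith [treeDist_nonneg hG f t s, treeDist_nonneg hG f s t, treeDist_comm hG f s t]
  apply le_antisymm
  · linarith [treeDist_triangle hG f t s x]
  · linarith [treeDist_triangle hG f s t x, treeDist_comm hG f s t]

end PT

lemma augDiam_comm {V X : Type*} [MetricSpace X] (G : SimpleGraph V) (f : V → X) (u v : V) :
    augDiam G f u v = augDiam G f v u := by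
  simp only [augDiam, augDist, dist_comm (f v), min_comm (treeDist G f _ v + _ + _)]

section Diameter

variable {V X : Type*} [MetricSpace X] {G : SimpleGraph V} {f : V → X} [Finite V]

lemma treeDist_le_treeDiam (x y : V) : treeDist G f x y ≤ treeDiam G f :=
  le_csSup (finite_setOf_exists_eq _).bddAbove ⟨x, y, rfl⟩

lemma exists_treeDist_eq_treeDiam [Nonempty V] : ∃ a b, treeDist G f a b = treeDiam G f := by
  obtain ⟨x⟩ := ‹Nonempty V›
  have hne : {r | ∃ a b, r = treeDist G f a b}.Nonempty := ⟨_, x, x, rfl⟩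
  obtain ⟨a, b, h⟩ := hne.csSup_mem (finite_setOf_exists_eq _)
  exact ⟨a, b, h.symm⟩

lemma augDist_le_augDiam (u v x y : V) : augDist G f u v x y ≤ augDiam G f u v :=
  le_csSup (finite_setOf_exists_eq _).bddAbove ⟨x, y, rfl⟩

lemma shortcut_lt_of_augDiam_lt {u v a b : V} (h : augDiam G f u v < treeDiam G f)
    (hab : treeDist G f a b = treeDiam G f) :
    treeDist G f a u + dist (f u) (f v) + treeDist G f v b < treeDiam G f ∨
      treeDist G f a v + dist (f u) (f v) + treeDist G f u b < treeDiam G f := by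
  have := (augDist_le_augDiam u v a b).trans_lt h
  rw [augDist, hab, min_lt_iff] at this
  exact this.resolve_left (lt_irrefl _) |> min_lt_iff.mp

end Diameter


section Shortcut

variable {V X : Type*} [MetricSpace X] {G : SimpleGraph V} {f : V → X} (hG : G.IsTree)
include hG

local notation "δ" => treeDist G f

lemma exists_diam_pair_treeDist_eq_add [Finite V] {u t : V} (ht : t ∈ PT G f)
    (hu : u = t ∨ hG.next t u ∉ PT G f) :
    ∃ a b, δ a b = treeDiam G f ∧ δ u a = δ u t + δ t a ∧ δ u b = δ u t + δ t b := by
  rcases hu with rfl | hu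
  · have : Nonempty V := ⟨u⟩
    obtain ⟨a, b, hab⟩ := exists_treeDist_eq_treeDiam (G := G) (f := f)
    exact ⟨a, b, hab, by rw [treeDist_self hG f, zero_add], by rw [treeDist_self hG f, zero_add]⟩
  · obtain ⟨a, b, hab, ha, hb⟩ := exists_diam_pair_next_ne hG ht hu
    exact ⟨a, b, hab, treeDist_eq_add_of_next_ne hG f (Ne.symm ha),
      treeDist_eq_add_of_next_ne hG f (Ne.symm hb)⟩

lemma shortcut_lt_of_diam_pair [Finite V] {u v t t' a b : V}
    (h : augDiam G f u v < treeDiam G f) (ht : t ∈ PT G f) (ht' : t' ∈ PT G f)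
    (hab : δ a b = treeDiam G f)
    (hua : δ u a = δ u t + δ t a) (hub : δ u b = δ u t + δ t b)
    (hva : δ v a = δ v t' + δ t' a) (hvb : δ v b = δ v t' + δ t' b) :
    δ t u + dist (f u) (f v) + δ v t' < δ t t' := by
  have hat := treeDist_eq_add_of_mem_PT hG ht hab
  have hat' := treeDist_eq_add_of_mem_PT hG ht' hab
  have horder : δ a t = δ a t' + δ t' t ∨ δ t b = δ t t' + δ t' b :=
    (hG.mem_path_or_mem_path (mem_path_of_mem_PT hG ht hab) (mem_path_of_mem_PT hG ht' hab)).imp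
      (treeDist_eq_add_of_mem_path hG f) (treeDist_eq_add_of_mem_path hG f)
  have := dist_nonneg (x := f u) (y := f v)
  -- whichever of `t`, `t'` comes first on the path from `a` to `b` rules out one of the routes
  rcases shortcut_lt_of_augDiam_lt h hab with hlt | hlt <;> rcases horder with ho | ho <;>
    linarith [treeDist_comm hG f a u, treeDist_comm hG f u t, treeDist_comm hG f t a,
      treeDist_comm hG f a v, treeDist_comm hG f t' a, treeDist_comm hG f t' t,
      treeDist_nonneg hG f t u, treeDist_nonneg hG f v t', treeDist_nonneg hG f t t']

lemma treeDist_add_dist_lt_of_diam_pair [Finite V] {u v t a b : V}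
    (h : augDiam G f u v < treeDiam G f) (ht : t ∈ PT G f) (hab : δ a b = treeDiam G f)
    (hua : δ u a = δ u t + δ t a) (hub : δ u b = δ u t + δ t b)
    (hvb : δ v b = δ v t + δ t b) :
    δ u t + dist (f u) (f v) < δ t v := by
  have hat := treeDist_eq_add_of_mem_PT hG ht hab
  have := dist_nonneg (x := f u) (y := f v)
  rcases shortcut_lt_of_augDiam_lt h hab with hlt | hlt <;>
    linarith [treeDist_comm hG f a u, treeDist_comm hG f t a, treeDist_comm hG f a v,
      treeDist_triangle hG f t v a, treeDist_nonneg hG f u t, treeDist_nonneg hG f v t]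

lemma treeDist_eq_treeDiam_of_crossing [Finite V] {t t' a₁ b₁ a₂ b₂ : V} (ht : t ∈ PT G f)
    (ht' : t' ∈ PT G f) (htt' : t ≠ t')
    (h₁ : δ a₁ b₁ = treeDiam G f) (h₂ : δ a₂ b₂ = treeDiam G f)
    (ha₁ : hG.next t' a₁ ∉ PT G f) (ha₂ : hG.next t a₂ ∉ PT G f)
    (ha₁₂ : hG.next t' a₁ ≠ hG.next t' a₂) :
    δ b₁ b₂ = treeDiam G f := by
  have hb₁ := mem_path_of_next_not_mem_PT hG ht ht' htt' h₁ ha₁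
  have hb₂ := mem_path_of_next_not_mem_PT hG ht' ht htt'.symm h₂ ha₂
  have hnext : hG.next t b₁ ≠ hG.next t b₂ := by
    rw [← hG.next_eq_of_mem_path hb₂ htt'.symm]
    exact (hG.next_ne_of_mem_path hb₁ htt'.symm).symm
  have e₁ := treeDist_eq_add_of_next_ne hG f hnext
  have e₂ := treeDist_eq_add_of_mem_path hG f hb₂
  have e₃ := treeDist_eq_add_of_mem_path hG f hb₁
  have e₄ := treeDist_eq_add_of_next_ne hG f ha₁₂
  have e₅ : δ t' a₂ = δ t' t + δ t a₂ :=
    treeDist_eq_add_of_next_ne hG f fun h => ha₂ (h ▸ next_mem_PT hG ht ht')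
  have s₁ := treeDist_eq_add_of_mem_PT hG ht' h₁
  have s₂ := treeDist_eq_add_of_mem_PT hG ht h₂
  -- `δ a₁ a₂ + δ b₁ b₂ = 2 * treeDiam G f`, and neither summand exceeds the diameter
  refine le_antisymm (treeDist_le_treeDiam b₁ b₂) ?_
  linarith [treeDist_le_treeDiam (G := G) (f := f) a₁ a₂, treeDist_comm hG f b₁ t,
    treeDist_comm hG f t' t, treeDist_comm hG f t a₂]

lemma shortcut_lt_of_crossing [Finite V] {u v t t' a₁ b₁ a₂ b₂ : V}
    (h : augDiam G f u v < treeDiam G f) (ht : t ∈ PT G f) (ht' : t' ∈ PT G f)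
    (hu : hG.next t u ∉ PT G f) (hv : hG.next t' v ∉ PT G f)
    (h₁ : δ a₁ b₁ = treeDiam G f) (ha₁ : hG.next t a₁ ≠ hG.next t u)
    (hb₁ : hG.next t b₁ ≠ hG.next t u) (ha₁v : hG.next t' a₁ = hG.next t' v)
    (h₂ : δ a₂ b₂ = treeDiam G f) (ha₂ : hG.next t' a₂ ≠ hG.next t' v)
    (hb₂ : hG.next t' b₂ ≠ hG.next t' v) (ha₂u : hG.next t a₂ = hG.next t u) :
    δ t u + dist (f u) (f v) + δ v t' < δ t t' := by
  have good : ∀ {w s x : V}, hG.next s x ≠ hG.next s w → δ w x = δ w s + δ s x :=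
    fun hx => treeDist_eq_add_of_next_ne hG f hx.symm
  have ha₁t' : a₁ ≠ t' := by
    rintro rfl
    exact hv (ha₁v ▸ next_mem_PT hG ht' ht')
  have ha₂t : a₂ ≠ t := by
    rintro rfl
    exact hu (ha₂u ▸ next_mem_PT hG ht ht)
  have hb₁v : hG.next t' b₁ ≠ hG.next t' v :=
    ha₁v ▸ (hG.next_ne_of_mem_path (mem_path_of_mem_PT hG ht' h₁) ha₁t').symm
  have hb₂u : hG.next t b₂ ≠ hG.next t u :=
    ha₂u ▸ (hG.next_ne_of_mem_path (mem_path_of_mem_PT hG ht h₂) ha₂t).symm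
  rcases eq_or_ne t t' with rfl | htt'
  · have hlt₁ := treeDist_add_dist_lt_of_diam_pair hG h ht h₁ (good ha₁) (good hb₁) (good hb₁v)
    have hlt₂ := treeDist_add_dist_lt_of_diam_pair hG (augDiam_comm G f u v ▸ h) ht h₂
      (good ha₂) (good hb₂) (good hb₂u)
    linarith [dist_comm (f u) (f v), dist_nonneg (x := f u) (y := f v),
      treeDist_comm hG f u t, treeDist_comm hG f v t]
  · have hb₁b₂ := treeDist_eq_treeDiam_of_crossing hG ht ht' htt' h₁ h₂ (ha₁v ▸ hv) (ha₂u ▸ hu)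
      (ha₁v ▸ ha₂.symm)
    exact shortcut_lt_of_diam_pair hG h ht ht' hb₁b₂ (good hb₁) (good hb₂u) (good hb₁v)
      (good hb₂)

lemma shortcut_lt_of_next_not_mem_PT [Finite V] {u v t t' : V}
    (h : augDiam G f u v < treeDiam G f) (ht : t ∈ PT G f) (ht' : t' ∈ PT G f)
    (hu : hG.next t u ∉ PT G f) (hv : hG.next t' v ∉ PT G f) :
    δ t u + dist (f u) (f v) + δ v t' < δ t t' := by
  have good : ∀ {w s x : V}, hG.next s x ≠ hG.next s w → δ w x = δ w s + δ s x :=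
    fun hx => treeDist_eq_add_of_next_ne hG f hx.symm
  have flip : ∀ {a b : V}, δ a b = treeDiam G f → δ b a = treeDiam G f :=
    fun hab => (treeDist_comm hG f _ _).trans hab
  obtain ⟨a₁, b₁, h₁, ha₁, hb₁⟩ := exists_diam_pair_next_ne hG ht hu
  obtain ⟨a₂, b₂, h₂, ha₂, hb₂⟩ := exists_diam_pair_next_ne hG ht' hv
  by_cases c₁ : hG.next t' a₁ ≠ hG.next t' v ∧ hG.next t' b₁ ≠ hG.next t' v
  · exact shortcut_lt_of_diam_pair hG h ht ht' h₁ (good ha₁) (good hb₁) (good c₁.1)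
      (good c₁.2)
  by_cases c₂ : hG.next t a₂ ≠ hG.next t u ∧ hG.next t b₂ ≠ hG.next t u
  · exact shortcut_lt_of_diam_pair hG h ht ht' h₂ (good c₂.1) (good c₂.2) (good ha₂)
      (good hb₂)
  rw [not_and_or, not_not, not_not] at c₁ c₂
  rcases c₁ with c₁ | c₁ <;> rcases c₂ with c₂ | c₂
  · exact shortcut_lt_of_crossing hG h ht ht' hu hv h₁ ha₁ hb₁ c₁ h₂ ha₂ hb₂ c₂
  · exact shortcut_lt_of_crossing hG h ht ht' hu hv h₁ ha₁ hb₁ c₁ (flip h₂) hb₂ ha₂ c₂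
  · exact shortcut_lt_of_crossing hG h ht ht' hu hv (flip h₁) hb₁ ha₁ c₁ h₂ ha₂ hb₂ c₂
  · exact shortcut_lt_of_crossing hG h ht ht' hu hv (flip h₁) hb₁ ha₁ c₁ (flip h₂) hb₂ ha₂ c₂

theorem shortcut_lt_of_feet [Finite V] {u v t t' : V} (h : augDiam G f u v < treeDiam G f)
    (ht : t ∈ PT G f) (ht' : t' ∈ PT G f) (hu : u = t ∨ hG.next t u ∉ PT G f)
    (hv : v = t' ∨ hG.next t' v ∉ PT G f) :
    δ t u + dist (f u) (f v) + δ v t' < δ t t' := by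
  have good_self : ∀ s x : V, δ s x = δ s s + δ s x := fun s x => by
    rw [treeDist_self hG f, zero_add]
  rcases hu with rfl | hu
  · obtain ⟨a, b, hab, hva, hvb⟩ := exists_diam_pair_treeDist_eq_add hG ht' hv
    exact shortcut_lt_of_diam_pair hG h ht ht' hab (good_self u a) (good_self u b) hva hvb
  rcases hv with rfl | hv
  · obtain ⟨a, b, hab, hua, hub⟩ := exists_diam_pair_treeDist_eq_add hG ht (Or.inr hu)
    exact shortcut_lt_of_diam_pair hG h ht ht' hab hua hub (good_self v a) (good_self v b)
  exact shortcut_lt_of_next_not_mem_PT hG h ht ht' hu hv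

end Shortcut

/-- Let `σ` map each vertex `w` to the unique vertex of `P_T`
nearest to `w` (equivalently, the vertex of `P_T` through which every path in `T`
from `w` to a vertex of `P_T` passes, so that `δ_T(w,z) = δ_T(w,σ w) + δ_T(σ w, z)`
for all `z ∈ P_T`). If `u, v` are vertices such that the diameter of `T ∪ {(u,v)}`
is strictly less than `diam(T)`, then
`δ_T(σ u, u) + d(u,v) + δ_T(v, σ v) < δ_T(σ u, σ v)`; in particular `σ u ≠ σ v`. -/
theorem shortcut_and_projection_inequality {V : Type*} [Fintype V] {X : Type*}
    [MetricSpace X] (G : SimpleGraph V) (hG : G.IsTree) (f : V → X)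
    (σ : V → V)
    (hσ_mem : ∀ w : V, σ w ∈ PT G f)
    (hσ_proj : ∀ w : V, ∀ z ∈ PT G f,
      treeDist G f w z = treeDist G f w (σ w) + treeDist G f (σ w) z)
    (u v : V) (h : augDiam G f u v < treeDiam G f) :
    treeDist G f (σ u) u + dist (f u) (f v) + treeDist G f v (σ v) <
        treeDist G f (σ u) (σ v) ∧
      σ u ≠ σ v := by
  obtain ⟨t, ht, hut⟩ := hG.exists_foot (PT G f) ⟨σ u, hσ_mem u⟩ u
  obtain ⟨t', ht', hvt'⟩ := hG.exists_foot (PT G f) ⟨σ v, hσ_mem v⟩ v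
  have hσu := treeDist_eq_of_foot hG ht hut (hσ_mem u) (hσ_proj u t ht)
  have hσv := treeDist_eq_of_foot hG ht' hvt' (hσ_mem v) (hσ_proj v t' ht')
  have hlt : treeDist G f (σ u) u + dist (f u) (f v) + treeDist G f v (σ v) <
      treeDist G f (σ u) (σ v) := by
    rw [← hσu u, treeDist_comm hG f v, ← hσv v, ← hσu (σ v), treeDist_comm hG f t (σ v), ← hσv t,
      treeDist_comm hG f t' v, treeDist_comm hG f t' t]
    exact shortcut_lt_of_feet hG h ht ht' hut hvt'
  refine ⟨hlt, fun heq => ?_⟩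
  rw [heq, treeDist_self hG f] at hlt
  linarith [treeDist_nonneg hG f (σ v) u, treeDist_nonneg hG f v (σ v),
    dist_nonneg (x := f u) (y := f v)]
end
end
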